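/- Suppose the graph G consists of a single communicating class and has at least one vertex of out-degree at least two. Then the shift flow ψ on Δ̄ has sensitive dependence on initial conditions with sensitivity constant δ = 1/2: for every x ∈ Δ̄ and every ε > 0, there exist y ∈ Δ̄ with d(x,y) < ε and a time t > 0 with d(ψ_t(x), ψ_t(y)) > 1/2. -/
import Mathlib


open MeasureTheory

def PC (S : Type*) (h : ℝ) : Set (ℝ → S) :=
  {x | ∀ n : ℤ, ∀ t ∈ Set.Ico ((n : ℝ) * h) (((n : ℝ) + 1) * h), x t = x ((n : ℝ) * h)}

/-- Aligned admissible functions (`Δ̄`). -/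
def Adm {S : Type*} (E : S → S → Prop) (h : ℝ) : Set (ℝ → S) :=
  {x | x ∈ PC S h ∧ ∀ n : ℤ, E (x ((n : ℝ) * h)) (x (((n : ℝ) + 1) * h))}

noncomputable def dd {S : Type*} [DecidableEq S] (h : ℝ) (x y : ℝ → S) : ℝ :=
  ∑' i : ℤ,
    ((1 / h) * ∫ t in (i : ℝ) * h..((i : ℝ) + 1) * h, (if x t = y t then (0 : ℝ) else 1)) /
      4 ^ i.natAbs

lemma summable_half : Summable fun i : ℤ => (1/2 : ℝ) ^ i.natAbs := by
  apply Summable.of_nat_of_neg <;>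
    simpa using summable_geometric_of_lt_one (by norm_num) (by norm_num : (1/2:ℝ) < 1)

lemma term_eq {V : Type*} [DecidableEq V] {h : ℝ} (hh : 0 < h) {x y : ℝ → V}
    (hx : x ∈ PC V h) (hy : y ∈ PC V h) (i : ℤ) :
    (1 / h) * ∫ t in (i : ℝ) * h..((i : ℝ) + 1) * h, (if x t = y t then (0:ℝ) else 1)
      = if x ((i:ℝ)*h) = y ((i:ℝ)*h) then 0 else 1 := by
  have hab : (i:ℝ)*h ≤ ((i:ℝ)+1)*h := by nlinarith
  have hne : ∀ᵐ t : ℝ, t ≠ ((i:ℝ)+1)*h := by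
    rw [MeasureTheory.ae_iff]
    simpa using measure_singleton (((i:ℝ)+1)*h)
  have hcongr : ∫ t in (i:ℝ)*h..((i:ℝ)+1)*h, (if x t = y t then (0:ℝ) else 1)
      = ∫ _ in (i:ℝ)*h..((i:ℝ)+1)*h, (if x ((i:ℝ)*h) = y ((i:ℝ)*h) then (0:ℝ) else 1) := by
    apply intervalIntegral.integral_congr_ae
    filter_upwards [hne] with t htne htmem
    rw [Set.uIoc_of_le hab] at htmem
    have hmem : t ∈ Set.Ico ((i:ℝ)*h) (((i:ℝ)+1)*h) :=
      ⟨htmem.1.le, lt_of_le_of_ne htmem.2 htne⟩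
    rw [hx i t hmem, hy i t hmem]
  rw [hcongr, intervalIntegral.integral_const]
  have : ((i:ℝ)+1)*h - (i:ℝ)*h = h := by ring
  rw [this, smul_eq_mul]
  field_simp

lemma dd_eq {V : Type*} [DecidableEq V] {h : ℝ} (hh : 0 < h) {x y : ℝ → V}
    (hx : x ∈ PC V h) (hy : y ∈ PC V h) :
    dd h x y = ∑' i : ℤ,
      (if x ((i:ℝ)*h) = y ((i:ℝ)*h) then (0:ℝ) else 1) / 4 ^ i.natAbs := by
  unfold dd
  exact tsum_congr fun i => by rw [term_eq hh hx hy]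

lemma summable_seq {V : Type*} [DecidableEq V] (a b : ℤ → V) :
    Summable fun i : ℤ => (if a i = b i then (0:ℝ) else 1) / 4 ^ i.natAbs := by
  apply Summable.of_nonneg_of_le _ _ summable_half
  · intro i; positivity
  · intro i
    have h4 : ((4:ℝ) ^ i.natAbs)⁻¹ ≤ (1/2)^i.natAbs := by
      rw [← inv_pow]
      apply pow_le_pow_left₀ (by norm_num) (by norm_num)
    split_ifs
    · simp only [zero_div]
      positivity
    · simpa [div_eq_mul_inv] using h4

lemma floor_grid {h : ℝ} (hh : 0 < h) {n : ℤ} {t : ℝ}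
    (ht : t ∈ Set.Ico ((n:ℝ)*h) (((n:ℝ)+1)*h)) : ⌊t / h⌋ = n := by
  rw [Int.floor_eq_iff]
  constructor
  · rw [le_div_iff₀ hh]; exact ht.1
  · rw [div_lt_iff₀ hh]; push_cast; exact ht.2

lemma floor_grid' {h : ℝ} (hh : 0 < h) (n : ℤ) : ⌊((n:ℝ)*h) / h⌋ = n :=
  floor_grid hh ⟨le_refl _, by nlinarith⟩

lemma seq_PC {S : Type*} {h : ℝ} (hh : 0 < h) (b : ℤ → S) :
    (fun t => b ⌊t / h⌋) ∈ PC S h := by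
  intro n t ht
  simp only [floor_grid hh ht, floor_grid' hh]

lemma PC_shift {S : Type*} {h : ℝ} (hh : 0 < h) {x : ℝ → S} (hx : x ∈ PC S h) (m : ℤ) :
    (fun s => x (s + (m:ℝ)*h)) ∈ PC S h := by
  intro n t ht
  have hmem : t + (m:ℝ)*h ∈ Set.Ico (((n+m : ℤ):ℝ)*h) ((((n+m:ℤ):ℝ)+1)*h) := by
    constructor
    · push_cast; nlinarith [ht.1]
    · push_cast; nlinarith [ht.2]
  have h2 : (n:ℝ)*h + (m:ℝ)*h = ((n+m:ℤ):ℝ)*h := by push_cast; ring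
  simp only []
  rw [hx (n+m) _ hmem, h2]

lemma path_to {V : Type*} {E : V → V → Prop} {u w : V}
    (hw : Relation.ReflTransGen E u w) :
    ∃ k : ℕ, ∃ c : ℕ → V, c 0 = u ∧ c k = w ∧ ∀ i < k, E (c i) (c (i+1)) := by
  induction hw with
  | refl => exact ⟨0, fun _ => u, rfl, rfl, by omega⟩
  | @tail b w' hab hbc ih =>
    obtain ⟨k, c, h0, hk, hc⟩ := ih
    refine ⟨k+1, fun i => if i ≤ k then c i else w', by simp [h0], by simp, ?_⟩
    intro i hi
    rcases Nat.lt_or_ge i k with hik | hik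
    · simp only [if_pos (by omega : i ≤ k), if_pos (by omega : i + 1 ≤ k)]
      exact hc i hik
    · have hik2 : i = k := by omega
      simp only [if_pos (by omega : i ≤ k), if_neg (by omega : ¬ i + 1 ≤ k)]
      rw [hik2, hk]; exact hbc

lemma path_infinite {V : Type*} {E : V → V → Prop} (hout : ∀ v : V, ∃ w : V, E v w) (u : V) :
    ∃ d : ℕ → V, d 0 = u ∧ ∀ i, E (d i) (d (i+1)) := by
  choose f hf using hout
  exact ⟨fun n => f^[n] u, rfl, fun i => by
    show E (f^[i] u) (f^[i+1] u)
    rw [Function.iterate_succ_apply']; exact hf _⟩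

/-- If the N-graph is a single communicating class (strongly connected) and some vertex
has out-degree at least two, then the shift flow on `Δ̄` has sensitive dependence on
initial conditions with sensitivity constant `1/2`. -/
theorem shift_sensitive_dependence {V : Type*} [Fintype V] [DecidableEq V]
    (E : V → V → Prop)
    (hout : ∀ v : V, ∃ w : V, E v w) (hin : ∀ v : V, ∃ w : V, E w v)
    (hconn : ∀ a b : V, Relation.ReflTransGen E a b)
    (hbranch : ∃ v w₁ w₂ : V, w₁ ≠ w₂ ∧ E v w₁ ∧ E v w₂)
    (h : ℝ) (hh : 0 < h) :
    ∀ x ∈ Adm E h, ∀ ε > (0 : ℝ), ∃ y ∈ Adm E h, dd h x y < ε ∧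
      ∃ t > (0 : ℝ), dd h (fun s => x (s + t)) (fun s => y (s + t)) > 1 / 2 := by
  intro x hx ε hε
  obtain ⟨v, w₁, w₂, hw12, hvw₁, hvw₂⟩ := hbranch
  have hxPC := hx.1
  set a : ℤ → V := fun n => x ((n:ℝ)*h) with ha
  have haE : ∀ n : ℤ, E (a n) (a (n+1)) := by
    intro n
    have h1 : (((n+1:ℤ)):ℝ) = (n:ℝ)+1 := by push_cast; ring
    simpa [ha, h1] using hx.2 n
  set S : ℝ := ∑' i : ℤ, (1/2:ℝ)^i.natAbs with hS
  have hS0 : 0 ≤ S := tsum_nonneg (fun i => by positivity)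
  obtain ⟨M, hM⟩ : ∃ M : ℕ, (1/2:ℝ)^M < ε / (S+1) :=
    exists_pow_lt_of_lt_one (by positivity) (by norm_num)
  obtain ⟨k, c, hc0, hck, hcE⟩ := path_to (hconn (a (M:ℤ)) v)
  set m : ℤ := (M:ℤ) + k + 1 with hm
  set w : V := if w₁ = a m then w₂ else w₁ with hwdef
  have hwne : w ≠ a m := by
    by_cases h1 : w₁ = a m
    · simpa [hwdef, h1] using fun h2 => hw12 (h1.trans h2.symm)
    · simpa [hwdef, h1] using h1
  have hEvw : E v w := by
    by_cases h1 : w₁ = a m <;> simp [hwdef, h1, hvw₁, hvw₂]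
  obtain ⟨d, hd0, hdE⟩ := path_infinite hout w
  set e : ℕ → V := fun i => if i ≤ k then c i else d (i - (k+1)) with he
  have he0 : e 0 = a (M:ℤ) := by simp [he, hc0]
  have heE : ∀ i, E (e i) (e (i+1)) := by
    intro i
    rcases lt_trichotomy i k with hik | hik | hik
    · simp only [he, if_pos (by omega : i ≤ k), if_pos (by omega : i+1 ≤ k)]
      exact hcE i hik
    · simp only [he, if_pos (by omega : i ≤ k), if_neg (by omega : ¬ i+1 ≤ k)]
      have h1 : i + 1 - (k+1) = 0 := by omega
      rw [h1, hd0, hik, hck]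
      exact hEvw
    · simp only [he, if_neg (by omega : ¬ i ≤ k), if_neg (by omega : ¬ i+1 ≤ k)]
      have h1 : i + 1 - (k+1) = (i - (k+1)) + 1 := by omega
      rw [h1]; exact hdE _
  have hek1 : e (k+1) = w := by simp [he, hd0]
  set b : ℤ → V := fun n => if n ≤ (M:ℤ) then a n else e (n - M).toNat with hb
  have hbeq : ∀ n : ℤ, n ≤ (M:ℤ) → b n = a n := by
    intro n hn; simp only [hb]; rw [if_pos hn]
  have hbE : ∀ n : ℤ, E (b n) (b (n+1)) := by
    intro n
    rcases lt_trichotomy n (M:ℤ) with hn | hn | hn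
    · simp only [hb]
      rw [if_pos (by omega : n ≤ (M:ℤ)), if_pos (by omega : n+1 ≤ (M:ℤ))]
      exact haE n
    · simp only [hb]
      rw [if_pos (by omega : n ≤ (M:ℤ)), if_neg (by omega : ¬ n+1 ≤ (M:ℤ))]
      have h1 : (n+1-(M:ℤ)).toNat = 1 := by omega
      rw [h1, hn]
      have h2 := heE 0
      rw [he0] at h2
      exact h2
    · simp only [hb]
      rw [if_neg (by omega : ¬ n ≤ (M:ℤ)), if_neg (by omega : ¬ n+1 ≤ (M:ℤ))]
      have h1 : (n+1-(M:ℤ)).toNat = (n-(M:ℤ)).toNat + 1 := by omega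
      rw [h1]; exact heE _
  have hbm : b m = w := by
    simp only [hb]
    rw [if_neg (by omega : ¬ m ≤ (M:ℤ))]
    have h1 : (m - (M:ℤ)).toNat = k+1 := by omega
    rw [h1, hek1]
  set y : ℝ → V := fun t => b ⌊t / h⌋ with hy
  have hyPC : y ∈ PC V h := seq_PC hh b
  have hygrid : ∀ i : ℤ, y ((i:ℝ)*h) = b i := fun i => by
    simp only [hy, floor_grid' hh]
  have hyAdm : y ∈ Adm E h := by
    refine ⟨hyPC, fun n => ?_⟩
    have h1 : ((n:ℝ)+1)*h = (((n+1:ℤ)):ℝ)*h := by push_cast; ring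
    rw [h1, hygrid, hygrid]
    exact hbE n
  have hddxy : dd h x y < ε := by
    rw [dd_eq hh hxPC hyPC]
    have hterm : ∀ i : ℤ,
        (if x ((i:ℝ)*h) = y ((i:ℝ)*h) then (0:ℝ) else 1) / 4 ^ i.natAbs
          = (if a i = b i then (0:ℝ) else 1) / 4 ^ i.natAbs := by
      intro i; rw [hygrid i]
    rw [tsum_congr hterm]
    have hle : ∀ i : ℤ, (if a i = b i then (0:ℝ) else 1) / 4 ^ i.natAbs
        ≤ (1/2:ℝ)^(M+1) * (1/2)^i.natAbs := by
      intro i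
      by_cases hiM : i ≤ (M:ℤ)
      · rw [if_pos (hbeq i hiM).symm]
        simp only [zero_div]
        positivity
      · have hna : M + 1 ≤ i.natAbs := by omega
        have h1 : (if a i = b i then (0:ℝ) else 1) / 4 ^ i.natAbs
            ≤ (1:ℝ) / 4 ^ i.natAbs := by
          apply div_le_div_of_nonneg_right ?_ (by positivity)
          split_ifs <;> norm_num
        have h2 : (1:ℝ) / 4 ^ i.natAbs = (1/2:ℝ)^i.natAbs * (1/2)^i.natAbs := by
          rw [← mul_pow]; norm_num
          simp [one_div, inv_pow]
        have h3 : ((1/2:ℝ))^i.natAbs ≤ (1/2:ℝ)^(M+1) :=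
          pow_le_pow_of_le_one (by norm_num) (by norm_num) hna
        calc (if a i = b i then (0:ℝ) else 1) / 4 ^ i.natAbs
            ≤ (1:ℝ) / 4 ^ i.natAbs := h1
          _ = (1/2:ℝ)^i.natAbs * (1/2)^i.natAbs := h2
          _ ≤ (1/2:ℝ)^(M+1) * (1/2)^i.natAbs := by
              apply mul_le_mul_of_nonneg_right h3 (by positivity)
    have hsumg : Summable fun i : ℤ => (1/2:ℝ)^(M+1) * (1/2)^i.natAbs :=
      summable_half.mul_left _
    have hts := Summable.tsum_le_tsum hle (summable_seq a b) hsumg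
    have htsg : ∑' i : ℤ, (1/2:ℝ)^(M+1) * (1/2)^i.natAbs = (1/2:ℝ)^(M+1) * S :=
      tsum_mul_left
    rw [htsg] at hts
    have hfin : (1/2:ℝ)^(M+1) * S < ε := by
      have h4 : (1/2:ℝ)^(M+1) ≤ (1/2:ℝ)^M :=
        pow_le_pow_of_le_one (by norm_num) (by norm_num) (by omega)
      have h5 : (1/2:ℝ)^M * (S+1) < ε := by
        rw [lt_div_iff₀ (by positivity : (0:ℝ) < S+1)] at hM
        exact hM
      nlinarith [pow_nonneg (by norm_num : (0:ℝ) ≤ 1/2) M,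
        pow_nonneg (by norm_num : (0:ℝ) ≤ 1/2) (M+1)]
    linarith
  have hm1 : (1:ℤ) ≤ m := by omega
  have ht0 : (0:ℝ) < (m:ℝ)*h := by
    have : (1:ℝ) ≤ (m:ℝ) := by exact_mod_cast hm1
    nlinarith
  refine ⟨y, hyAdm, hddxy, (m:ℝ)*h, ht0, ?_⟩
  have hx' := PC_shift hh hxPC m
  have hy' := PC_shift hh hyPC m
  rw [dd_eq hh hx' hy']
  have hsum : Summable fun i : ℤ =>
      (if (fun s => x (s + (m:ℝ)*h)) ((i:ℝ)*h) = (fun s => y (s + (m:ℝ)*h)) ((i:ℝ)*h)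
        then (0:ℝ) else 1) / 4 ^ i.natAbs :=
    summable_seq (fun i => x ((i:ℝ)*h + (m:ℝ)*h)) (fun i => y ((i:ℝ)*h + (m:ℝ)*h))
  have h0 : (if (fun s => x (s + (m:ℝ)*h)) (((0:ℤ):ℝ)*h)
      = (fun s => y (s + (m:ℝ)*h)) (((0:ℤ):ℝ)*h) then (0:ℝ) else 1)
        / 4 ^ (0:ℤ).natAbs = 1 := by
    have harg : ((0:ℤ):ℝ)*h + (m:ℝ)*h = ((m:ℤ):ℝ)*h := by push_cast; ring
    simp only []
    simp only [harg, hygrid m, hbm]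
    rw [if_neg (fun hc => hwne hc.symm)]
    norm_num
  have hle0 := Summable.le_tsum hsum 0 (fun j _ => by
    split_ifs
    · simp
    · positivity)
  rw [h0] at hle0
  linarith
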